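/- arXiv:1305.2446 — 5 statements merged into one kernel-verified Lean document; each statement's English description precedes it below -/
import Mathlib

section
/- Let a ≤ b ≤ c be real numbers with b ≤ t ≤ c (t plays the role of OPT), and let p ≥ 1. Then (b - a)^p + (c - b)^p ≤ 2^(p-1) * ((t - a)^p + (c - t)^p). -/
/-!
Both sides only see the two gaps into which a point of `[a, c]` splits the segment, and the gaps
have the same total `c - a` whether the point is `b` or `t`. For `p ≥ 1`, superadditivity of
`x ↦ x ^ p` gives `(b - a) ^ p + (c - b) ^ p ≤ (c - a) ^ p`, and convexity gives
`(c - a) ^ p ≤ 2 ^ (p - 1) * ((t - a) ^ p + (c - t) ^ p)`.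
-/

namespace Real

lemma rpow_add_le_mul_rpow_add_rpow {p x y : ℝ} (hx : 0 ≤ x) (hy : 0 ≤ y) (hp : 1 ≤ p) :
    (x + y) ^ p ≤ 2 ^ (p - 1) * (x ^ p + y ^ p) := by
  lift x to NNReal using hx
  lift y to NNReal using hy
  exact_mod_cast NNReal.rpow_add_le_mul_rpow_add_rpow x y hp

lemma rpow_add_rpow_le_mul_rpow_add_rpow_of_add_eq {p x y u v : ℝ} (hx : 0 ≤ x) (hy : 0 ≤ y)
    (hu : 0 ≤ u) (hv : 0 ≤ v) (hp : 1 ≤ p) (hsum : x + y = u + v) :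
    x ^ p + y ^ p ≤ 2 ^ (p - 1) * (u ^ p + v ^ p) :=
  calc x ^ p + y ^ p ≤ (x + y) ^ p := add_rpow_le_rpow_add hx hy hp
    _ = (u + v) ^ p := by rw [hsum]
    _ ≤ 2 ^ (p - 1) * (u ^ p + v ^ p) := rpow_add_le_mul_rpow_add_rpow hu hv hp

end Real

theorem pair_bound_opt_inside_general (a b c t p : ℝ) (hab : a ≤ b)
    (hbt : b ≤ t) (htc : t ≤ c) (hp : 1 ≤ p) :
    (b - a) ^ p + (c - b) ^ p ≤ 2 ^ (p - 1) * ((t - a) ^ p + (c - t) ^ p) :=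
  Real.rpow_add_rpow_le_mul_rpow_add_rpow_of_add_eq (by linarith) (by linarith) (by linarith)
    (by linarith) hp (by ring)

theorem pair_bound_opt_inside (a b c t p : ℝ) (hab : a ≤ b) (hbc : b ≤ c)
    (hbt : b ≤ t) (htc : t ≤ c) (hp : 1 ≤ p) :
    (b - a) ^ p + (c - b) ^ p ≤ 2 ^ (p - 1) * ((t - a) ^ p + (c - t) ^ p) :=
  pair_bound_opt_inside_general a b c t p hab hbt htc hp
end

section
/- Fix p > 1. There is no deterministic strategyproof mechanism for 2 agents on ℝ whose approximation ratio for the L_p social cost is strictly less than 2^(1-1/p). Formally: there is no function f : ℝ × ℝ → ℝ such that (i) for all x₁, x₂, x₁' : (choosing z = f(x₁,x₂)) |x₁ - f(x₁,x₂)| ≤ |x₁ - f(x₁',x₂)| and symmetrically for agent 2, and (ii) there exists r < 2^(1-1/p) with (|f(x₁,x₂)-x₁|^p + |f(x₁,x₂)-x₂|^p)^(1/p) ≤ r * inf_y (|y-x₁|^p + |y-x₂|^p)^(1/p) for all x₁, x₂. -/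
/-!
At the profile (0, 1) the midpoint has cost 2^(1/p - 1), so a mechanism of ratio r < 2^(1 - 1/p)
must place the facility at some a < 1. Agent 1 located at a can then report 0 and get distance 0,
so strategyproofness forces f(a, 1) = a. At the profile (a, 1) this has cost 1 - a, whereas the
midpoint costs 2^(1/p - 1) (1 - a), a ratio of 2^(1 - 1/p).
-/

noncomputable def lpSocialCost (p y x₁ x₂ : ℝ) : ℝ := (|y - x₁| ^ p + |y - x₂| ^ p) ^ (1 / p)

lemma lpSocialCost_nonneg (p y x₁ x₂ : ℝ) : 0 ≤ lpSocialCost p y x₁ x₂ := by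
  unfold lpSocialCost; positivity

lemma abs_sub_le_lpSocialCost {p : ℝ} (hp : 0 < p) (y x₁ x₂ : ℝ) :
    |y - x₁| ≤ lpSocialCost p y x₁ x₂ := by
  calc |y - x₁| = (|y - x₁| ^ p) ^ (1 / p) := by
        rw [one_div, Real.rpow_rpow_inv (abs_nonneg _) hp.ne']
    _ ≤ lpSocialCost p y x₁ x₂ := by
        unfold lpSocialCost
        gcongr
        exact le_add_of_nonneg_right (by positivity)

lemma lpSocialCost_self_left {p : ℝ} (hp : 0 < p) (x₁ x₂ : ℝ) :
    lpSocialCost p x₁ x₁ x₂ = |x₂ - x₁| := by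
  rw [lpSocialCost, sub_self, abs_zero, Real.zero_rpow hp.ne', zero_add, one_div,
    Real.rpow_rpow_inv (abs_nonneg _) hp.ne', abs_sub_comm]

lemma lpSocialCost_midpoint {p : ℝ} (hp : 0 < p) (x₁ x₂ : ℝ) :
    lpSocialCost p ((x₁ + x₂) / 2) x₁ x₂ = 2 ^ (1 / p - 1) * |x₂ - x₁| := by
  have h₁ : |(x₁ + x₂) / 2 - x₁| = |x₂ - x₁| / 2 := by
    rw [show (x₁ + x₂) / 2 - x₁ = (x₂ - x₁) / 2 by ring, abs_div, abs_two]
  have h₂ : |(x₁ + x₂) / 2 - x₂| = |x₂ - x₁| / 2 := by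
    rw [show (x₁ + x₂) / 2 - x₂ = -((x₂ - x₁) / 2) by ring, abs_neg, abs_div, abs_two]
  have hd : 0 ≤ |x₂ - x₁| / 2 := by positivity
  rw [lpSocialCost, h₁, h₂, ← two_mul, Real.mul_rpow zero_le_two (by positivity), one_div,
    Real.rpow_rpow_inv hd hp.ne', Real.rpow_sub_one two_ne_zero]
  ring

lemma iInf_lpSocialCost_le {p : ℝ} (hp : 0 < p) (x₁ x₂ : ℝ) :
    ⨅ y, lpSocialCost p y x₁ x₂ ≤ 2 ^ (1 / p - 1) * |x₂ - x₁| :=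
  lpSocialCost_midpoint hp x₁ x₂ ▸
    ciInf_le ⟨0, by rintro _ ⟨y, rfl⟩; exact lpSocialCost_nonneg p y x₁ x₂⟩ _

lemma mul_iInf_lpSocialCost_lt {p r : ℝ} (hp : 0 < p) (hr : r < 2 ^ (1 - 1 / p)) {x₁ x₂ : ℝ}
    (hx : x₁ ≠ x₂) : r * ⨅ y, lpSocialCost p y x₁ x₂ < |x₂ - x₁| := by
  have hd : 0 < |x₂ - x₁| := abs_pos.mpr (sub_ne_zero.mpr hx.symm)
  rcases le_or_gt r 0 with hr₀ | hr₀
  · exact (mul_nonpos_of_nonpos_of_nonneg hr₀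
      (Real.iInf_nonneg fun y => lpSocialCost_nonneg p y x₁ x₂)).trans_lt hd
  · calc r * ⨅ y, lpSocialCost p y x₁ x₂ ≤ r * (2 ^ (1 / p - 1) * |x₂ - x₁|) := by
          gcongr; exact iInf_lpSocialCost_le hp x₁ x₂
      _ < 2 ^ (1 - 1 / p) * (2 ^ (1 / p - 1) * |x₂ - x₁|) := by gcongr
      _ = |x₂ - x₁| := by
          rw [← mul_assoc, ← Real.rpow_add two_pos]; norm_num

lemma apply_apply_eq_of_strategyproof {f : ℝ → ℝ → ℝ}
    (hf : ∀ x₁ x₂ x₁' : ℝ, |x₁ - f x₁ x₂| ≤ |x₁ - f x₁' x₂|) (x₁ x₂ : ℝ) :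
    f (f x₁ x₂) x₂ = f x₁ x₂ := by
  have h := hf (f x₁ x₂) x₂ x₁
  rw [sub_self, abs_zero, abs_nonpos_iff, sub_eq_zero] at h
  exact h.symm

theorem no_good_deterministic_sp_mechanism (p : ℝ) (hp : 1 < p) :
    ¬ ∃ f : ℝ → ℝ → ℝ,
      (∀ x₁ x₂ x₁' : ℝ, |x₁ - f x₁ x₂| ≤ |x₁ - f x₁' x₂|) ∧
      (∀ x₁ x₂ x₂' : ℝ, |x₂ - f x₁ x₂| ≤ |x₂ - f x₁ x₂'|) ∧
      (∃ r : ℝ, r < 2 ^ (1 - 1 / p) ∧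
        ∀ x₁ x₂ : ℝ,
          (|f x₁ x₂ - x₁| ^ p + |f x₁ x₂ - x₂| ^ p) ^ (1 / p)
            ≤ r * ⨅ y : ℝ, (|y - x₁| ^ p + |y - x₂| ^ p) ^ (1 / p)) := by
  rintro ⟨f, hsp, -, r, hr, hratio⟩
  have hp₀ : 0 < p := zero_lt_one.trans hp
  have hcost : ∀ x₁ x₂, x₁ ≠ x₂ → lpSocialCost p (f x₁ x₂) x₁ x₂ < |x₂ - x₁| :=
    fun x₁ x₂ hx => (hratio x₁ x₂).trans_lt (mul_iInf_lpSocialCost_lt hp₀ hr hx)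
  set a := f 0 1
  have ha : a < 1 := by
    have h := (abs_sub_le_lpSocialCost hp₀ a 0 1).trans_lt (hcost 0 1 zero_ne_one)
    rw [sub_zero, sub_zero, abs_one] at h
    exact (le_abs_self a).trans_lt h
  have h := hcost a 1 ha.ne
  rw [apply_apply_eq_of_strategyproof hsp, lpSocialCost_self_left hp₀] at h
  exact lt_irrefl _ h
end

section
/- For every integer p > 2, integer k ≥ 1, and integer j with k^(1/(p-1)) + 1 ≤ j ≤ k, setting Q = 2^(p-1), one has j·(Q(j−1))^(p−1) − (k − j + 1) − (j − 1)·(1 + Q(j−1))^(p−1) > 0. -/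
/-! With `x = j - 1` and `Q = 2^(p-1)`, the hypothesis on `j` says `k ≤ x^(p-1)` and `Qx ≥ 1`.
Every binomial term of `(1 + Qx)^(p-1)` beyond the leading one is at most `(Qx)^(p-2)`, and their
coefficients sum to `Q - 1`, so `x (1 + Qx)^(p-1) ≤ x (Qx)^(p-1) + (Q - 1) x (Qx)^(p-2)`.
Substituting, the expression is at least `x (Qx)^(p-2) - k + x ≥ x^(p-1) - k + x ≥ x > 0`. -/

lemma add_pow_succ_le {a b : ℝ} (ha : 0 ≤ a) (hab : a ≤ b) (n : ℕ) :
    (a + b) ^ (n + 1) ≤ b ^ (n + 1) + (2 ^ (n + 1) - 1) * a * b ^ n := by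
  induction n with
  | zero => norm_num [add_comm]
  | succ n ih =>
    have hbn : 0 ≤ b ^ n := pow_nonneg (ha.trans hab) n
    have h2 : (1 : ℝ) ≤ 2 ^ (n + 1) := one_le_pow₀ (by norm_num)
    have hab' : a * a * b ^ n ≤ a * b * b ^ n := by gcongr
    calc (a + b) ^ (n + 2) = (a + b) ^ (n + 1) * (a + b) := pow_succ _ _
      _ ≤ (b ^ (n + 1) + (2 ^ (n + 1) - 1) * a * b ^ n) * (a + b) := by
          gcongr; linarith
      _ = b ^ (n + 2) + 2 ^ (n + 1) * a * b ^ (n + 1) + (2 ^ (n + 1) - 1) * (a * a * b ^ n) := by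
          ring
      _ ≤ b ^ (n + 2) + 2 ^ (n + 1) * a * b ^ (n + 1) + (2 ^ (n + 1) - 1) * (a * b * b ^ n) := by
          gcongr
      _ = b ^ (n + 2) + (2 ^ (n + 2) - 1) * a * b ^ (n + 1) := by ring

lemma le_pow_of_rpow_inv_le {k x : ℝ} {n : ℕ} (hk : 0 ≤ k) (hn : n ≠ 0)
    (h : k ^ (n⁻¹ : ℝ) ≤ x) : k ≤ x ^ n := by
  calc k = (k ^ (n⁻¹ : ℝ)) ^ n := (Real.rpow_inv_natCast_pow hk hn).symm
    _ ≤ x ^ n := by gcongr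

lemma g_pos_of_le_pow (n : ℕ) {k j : ℝ} (hj : 1 ≤ j - 1) (hk : k ≤ (j - 1) ^ (n + 1)) :
    0 < j * (2 ^ (n + 1) * (j - 1)) ^ (n + 1) - (k - j + 1)
        - (j - 1) * (1 + 2 ^ (n + 1) * (j - 1)) ^ (n + 1) := by
  set x := j - 1
  set Q : ℝ := 2 ^ (n + 1)
  have hQ : 1 ≤ Q := one_le_pow₀ (by norm_num)
  have hQx : 1 ≤ Q * x := by nlinarith
  have hbinom : x * (1 + Q * x) ^ (n + 1) ≤ x * ((Q * x) ^ (n + 1) + (Q - 1) * (Q * x) ^ n) := by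
    gcongr
    simpa using add_pow_succ_le zero_le_one hQx n
  have hpow : x ^ n ≤ (Q * x) ^ n := by gcongr; nlinarith
  have hxk : k ≤ x * (Q * x) ^ n := by
    calc k ≤ x * x ^ n := by rwa [pow_succ'] at hk
      _ ≤ x * (Q * x) ^ n := by gcongr
  have hj_eq : j = x + 1 := by ring
  rw [hj_eq]
  nlinarith [pow_succ (Q * x) n]

theorem g_positive_at_Q_general (p k j : ℕ) (hp : 2 < p) (hk : 1 ≤ k)
    (hj : (k : ℝ) ^ ((1 : ℝ) / ((p : ℝ) - 1)) + 1 ≤ (j : ℝ)) :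
    0 < (j : ℝ) * ((2 ^ (p - 1) : ℝ) * ((j : ℝ) - 1)) ^ (p - 1)
        - ((k : ℝ) - (j : ℝ) + 1)
        - ((j : ℝ) - 1) * (1 + (2 ^ (p - 1) : ℝ) * ((j : ℝ) - 1)) ^ (p - 1) := by
  obtain ⟨n, rfl⟩ : ∃ n, p = n + 2 := ⟨p - 2, by omega⟩
  have hexp : (1 : ℝ) / (((n + 2 : ℕ) : ℝ) - 1) = ((n + 1 : ℕ) : ℝ)⁻¹ := by
    push_cast; ring
  rw [hexp] at hj
  have hroot : 1 ≤ (k : ℝ) ^ (((n + 1 : ℕ) : ℝ)⁻¹) :=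
    Real.one_le_rpow (by exact_mod_cast hk) (by positivity)
  exact g_pos_of_le_pow n (by linarith)
    (le_pow_of_rpow_inv_le (Nat.cast_nonneg k) n.succ_ne_zero (by linarith))

theorem g_positive_at_Q (p k j : ℕ) (hp : 2 < p) (hk : 1 ≤ k) (hjk : j ≤ k)
    (hj : (k : ℝ) ^ ((1 : ℝ) / ((p : ℝ) - 1)) + 1 ≤ (j : ℝ)) :
    0 < (j : ℝ) * ((2 ^ (p - 1) : ℝ) * ((j : ℝ) - 1)) ^ (p - 1)
        - ((k : ℝ) - (j : ℝ) + 1)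
        - ((j : ℝ) - 1) * (1 + (2 ^ (p - 1) : ℝ) * ((j : ℝ) - 1)) ^ (p - 1) :=
  g_positive_at_Q_general p k j hp hk hj
end

section
/- Fix p ≥ 1. The LRM mechanism for two agents at x₁ < x₂, which places probability 1/4 at x₁, 1/4 at x₂, and 1/2 at (x₁+x₂)/2, has expected social cost exactly ((2^(1−1/p) + 1)/2) times the optimal social cost for every two-agent profile. -/
/-!
At either agent the social cost is the distance `d = |x₂ - x₁|` between the agents, and at the
midpoint it is `(2 (d/2)^p)^(1/p) = d · 2^(1/p - 1)`, the optimum. The expected cost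
`d/2 + d · 2^(1/p - 1) / 2` is then the claimed multiple of the optimum because
`2^(1 - 1/p) · 2^(1/p - 1) = 1`.
-/

open Real

noncomputable section

def socialCost (p x₁ x₂ y : ℝ) : ℝ :=
  (|y - x₁| ^ p + |y - x₂| ^ p) ^ (1 / p)

variable {p : ℝ} (x₁ x₂ : ℝ)

theorem socialCost_left (hp : p ≠ 0) : socialCost p x₁ x₂ x₁ = |x₂ - x₁| := by
  rw [socialCost, sub_self, abs_zero, zero_rpow hp, zero_add, abs_sub_comm, one_div,
    rpow_rpow_inv (abs_nonneg _) hp]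

theorem socialCost_right (hp : p ≠ 0) : socialCost p x₁ x₂ x₂ = |x₂ - x₁| := by
  rw [socialCost, sub_self, abs_zero, zero_rpow hp, add_zero, one_div,
    rpow_rpow_inv (abs_nonneg _) hp]

theorem rpow_add_self_rpow_one_div {b : ℝ} (hb : 0 ≤ b) (hp : p ≠ 0) :
    (b ^ p + b ^ p) ^ (1 / p) = 2 ^ (1 / p) * b := by
  rw [← two_mul, mul_rpow zero_le_two (rpow_nonneg hb p), one_div, rpow_rpow_inv hb hp]

theorem socialCost_midpoint (hp : p ≠ 0) :
    socialCost p x₁ x₂ ((x₁ + x₂) / 2) = |x₂ - x₁| * 2 ^ (1 / p - 1) := by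
  have hleft : |(x₁ + x₂) / 2 - x₁| = |x₂ - x₁| / 2 := by
    rw [show (x₁ + x₂) / 2 - x₁ = (x₂ - x₁) / 2 by ring, abs_div, abs_two]
  have hright : |(x₁ + x₂) / 2 - x₂| = |x₂ - x₁| / 2 := by
    rw [show (x₁ + x₂) / 2 - x₂ = -((x₂ - x₁) / 2) by ring, abs_neg, abs_div, abs_two]
  rw [socialCost, hleft, hright, rpow_add_self_rpow_one_div (by positivity) hp,
    rpow_sub zero_lt_two, rpow_one]
  ring

end

theorem lrm_expected_cost_general (p x₁ x₂ : ℝ) (hp : 1 ≤ p) :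
    (1 / 4) * ((|x₁ - x₁| ^ p + |x₁ - x₂| ^ p) ^ (1 / p))
      + (1 / 4) * ((|x₂ - x₁| ^ p + |x₂ - x₂| ^ p) ^ (1 / p))
      + (1 / 2) * ((|(x₁ + x₂) / 2 - x₁| ^ p + |(x₁ + x₂) / 2 - x₂| ^ p) ^ (1 / p))
    = ((2 ^ (1 - 1 / p) + 1) / 2) * (|x₂ - x₁| * 2 ^ (1 / p - 1)) := by
  have hp0 : p ≠ 0 := by positivity
  change (1 / 4) * socialCost p x₁ x₂ x₁ + (1 / 4) * socialCost p x₁ x₂ x₂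
      + (1 / 2) * socialCost p x₁ x₂ ((x₁ + x₂) / 2) = _
  have hexp : (2 : ℝ) ^ (1 - 1 / p) * 2 ^ (1 / p - 1) = 1 := by
    rw [← rpow_add zero_lt_two, sub_add_sub_cancel', sub_self, rpow_zero]
  rw [socialCost_left x₁ x₂ hp0, socialCost_right x₁ x₂ hp0, socialCost_midpoint x₁ x₂ hp0]
  linear_combination (-|x₂ - x₁| / 2) * hexp

theorem lrm_expected_cost (p x₁ x₂ : ℝ) (hp : 1 ≤ p) (hx : x₁ < x₂) :
    (1 / 4) * ((|x₁ - x₁| ^ p + |x₁ - x₂| ^ p) ^ (1 / p))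
      + (1 / 4) * ((|x₂ - x₁| ^ p + |x₂ - x₂| ^ p) ^ (1 / p))
      + (1 / 2) * ((|(x₁ + x₂) / 2 - x₁| ^ p + |(x₁ + x₂) / 2 - x₂| ^ p) ^ (1 / p))
    = ((2 ^ (1 - 1 / p) + 1) / 2) * (|x₂ - x₁| * 2 ^ (1 / p - 1)) :=
  lrm_expected_cost_general p x₁ x₂ hp
end

section
/- Let p ≥ 1 and consider a randomized mechanism g for two agents, symmetric about the midpoint, supported on {x₁, m, x₂} (m the midpoint), shift- and scale-invariant, and strategyproof. Then P(g(x) ∈ {x₁, x₂}) ≥ 1/2 for every profile x₁ < x₂. -/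
/-!
Let `μ = g x₁ x₂` put mass `A` on each endpoint (by symmetry) and `B = 1 - 2A` on the midpoint.
If agent 1 reports `2 x₁ - x₂` instead of `x₁`, the midpoint of the new profile is the true
location `x₁`, and by shift- and scale-invariance the new outcome is the image of `μ` under
`y ↦ 2y - x₂`: mass `A` at `2x₁ - x₂`, `B` at `x₁`, `A` at `x₂`. The agent's expected cost is
`(x₂ - x₁)(B/2 + A)` when truthful and `(x₂ - x₁) 2A` after deviating, so strategyproofness
forces `B ≤ 2A`, i.e. `2A ≥ 1/2`.
-/

open MeasureTheory

theorem integral_eq_sum_of_measure_compl_eq_zero {X E : Type*} [MeasurableSpace X]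
    [MeasurableSingletonClass X] [NormedAddCommGroup E] [NormedSpace ℝ E] [CompleteSpace E]
    {μ : Measure X} [IsFiniteMeasure μ] {s : Finset X} (hs : μ (↑s)ᶜ = 0) (f : X → E) :
    ∫ x, f x ∂μ = ∑ x ∈ s, μ.real {x} • f x := by
  calc ∫ x, f x ∂μ = ∫ x in s, f x ∂μ := by
        rw [Measure.restrict_eq_self_of_ae_mem (s := (s : Set X)) hs]
    _ = ∑ x ∈ s, μ.real {x} • f x := setIntegral_finset s IntegrableOn.finset

theorem integral_eq_of_measure_compl_triple_eq_zero {μ : Measure ℝ} [IsFiniteMeasure μ]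
    {a b c : ℝ} (hab : a ≠ b) (hac : a ≠ c) (hbc : b ≠ c) (h : μ {a, b, c}ᶜ = 0) (f : ℝ → ℝ) :
    ∫ y, f y ∂μ = μ.real {a} * f a + μ.real {b} * f b + μ.real {c} * f c := by
  rw [integral_eq_sum_of_measure_compl_eq_zero (s := {a, b, c}) (by simpa using h),
    Finset.sum_insert (by simp [hab, hac]), Finset.sum_insert (by simp [hbc]),
    Finset.sum_singleton]
  simp only [smul_eq_mul]
  ring

theorem measure_singleton_eq_of_measure_Ici_eq_Iic {μ : Measure ℝ} {a m b : ℝ}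
    (ham : a < m) (hmb : m < b) (h : μ {a, m, b}ᶜ = 0)
    (hsymm : μ {y | b ≤ y} = μ {y | y ≤ a}) : μ {a} = μ {b} := by
  have hIci : {y | b ≤ y} ∩ {a, m, b} = {b} := by
    ext y; simp only [Set.mem_inter_iff, Set.mem_ofPred_eq, Set.mem_insert_iff,
      Set.mem_singleton_iff]; grind
  have hIic : {y | y ≤ a} ∩ {a, m, b} = {a} := by
    ext y; simp only [Set.mem_inter_iff, Set.mem_ofPred_eq, Set.mem_insert_iff,
      Set.mem_singleton_iff]; grind
  rw [← hIci, ← hIic, measure_inter_conull h, measure_inter_conull h, hsymm]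

theorem map_affine_of_shift_of_scale (g : ℝ → ℝ → Measure ℝ)
    (hshift : ∀ x₁ x₂ c : ℝ, g (x₁ + c) (x₂ + c) = Measure.map (· + c) (g x₁ x₂))
    (hscale : ∀ x₁ x₂ c : ℝ, 0 < c → g (c * x₁) (c * x₂) = Measure.map (c * ·) (g x₁ x₂))
    {c : ℝ} (hc : 0 < c) (s x₁ x₂ : ℝ) :
    g (c * x₁ + s) (c * x₂ + s) = (g x₁ x₂).map (fun y => c * y + s) := by
  rw [hshift, hscale _ _ _ hc, Measure.map_map (measurable_add_const _) (measurable_const_mul _)]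
  rfl

theorem one_half_le_measureReal_endpoints {μ : Measure ℝ} [IsProbabilityMeasure μ] {a b : ℝ}
    (hab : a < b) (h : μ {a, (a + b) / 2, b}ᶜ = 0) (hsymm : μ {a} = μ {b})
    (hcost : ∫ y, |y - a| ∂μ ≤ ∫ y, |2 * y - b - a| ∂μ) :
    1 / 2 ≤ μ.real {a, b} := by
  have ham : a ≠ (a + b) / 2 := (by linarith : a < (a + b) / 2).ne
  have hmb : (a + b) / 2 ≠ b := (by linarith : (a + b) / 2 < b).ne
  have hmass := integral_eq_of_measure_compl_triple_eq_zero ham hab.ne hmb h fun _ => 1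
  have htruth := integral_eq_of_measure_compl_triple_eq_zero ham hab.ne hmb h fun y => |y - a|
  have hdev := integral_eq_of_measure_compl_triple_eq_zero ham hab.ne hmb h
    fun y => |2 * y - b - a|
  have hsymm' : μ.real {a} = μ.real {b} := congrArg ENNReal.toReal hsymm
  rw [Set.insert_eq, measureReal_union (by simpa using hab.ne) (measurableSet_singleton b)]
  simp only [integral_const, probReal_univ, smul_eq_mul, mul_one] at hmass
  rw [htruth, hdev, abs_of_nonneg (by linarith), abs_of_nonneg (by linarith),
    abs_of_nonneg (by linarith), abs_of_nonpos (by linarith), abs_of_nonneg (by linarith),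
    abs_of_nonneg (by linarith)] at hcost
  nlinarith

theorem endpoint_mass_at_least_half_general
    (g : ℝ → ℝ → Measure ℝ)
    (hprob : ∀ x₁ x₂ : ℝ, IsProbabilityMeasure (g x₁ x₂))
    (hsupp : ∀ x₁ x₂ : ℝ, x₁ < x₂ →
      g x₁ x₂ ({x₁, (x₁ + x₂) / 2, x₂} : Set ℝ)ᶜ = 0)
    (hsym : ∀ x₁ x₂ t : ℝ, x₁ < x₂ →
      g x₁ x₂ {y | (x₁ + x₂) / 2 + t ≤ y} = g x₁ x₂ {y | y ≤ (x₁ + x₂) / 2 - t})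
    (hshift : ∀ x₁ x₂ c : ℝ, g (x₁ + c) (x₂ + c) = Measure.map (· + c) (g x₁ x₂))
    (hscale : ∀ x₁ x₂ c : ℝ, 0 < c → g (c * x₁) (c * x₂) = Measure.map (c * ·) (g x₁ x₂))
    (hsp1 : ∀ x₁ x₂ x₁' : ℝ,
      ∫ y, |y - x₁| ∂(g x₁ x₂) ≤ ∫ y, |y - x₁| ∂(g x₁' x₂)) :
    ∀ x₁ x₂ : ℝ, x₁ < x₂ → 1 / 2 ≤ (g x₁ x₂ ({x₁, x₂} : Set ℝ)).toReal := by
  intro x₁ x₂ hlt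
  have := hprob x₁ x₂
  have hsupp₁₂ := hsupp x₁ x₂ hlt
  have hsymm := hsym x₁ x₂ ((x₂ - x₁) / 2) hlt
  rw [show (x₁ + x₂) / 2 + (x₂ - x₁) / 2 = x₂ by ring,
    show (x₁ + x₂) / 2 - (x₂ - x₁) / 2 = x₁ by ring] at hsymm
  have hdev : g (2 * x₁ - x₂) x₂ = (g x₁ x₂).map (fun y => 2 * y - x₂) := by
    have h := map_affine_of_shift_of_scale g hshift hscale two_pos (-x₂) x₁ x₂
    simpa only [← sub_eq_add_neg, two_mul, add_sub_cancel_right] using h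
  refine one_half_le_measureReal_endpoints hlt hsupp₁₂
    (measure_singleton_eq_of_measure_Ici_eq_Iic (by linarith) (by linarith) hsupp₁₂ hsymm) ?_
  calc ∫ y, |y - x₁| ∂g x₁ x₂ ≤ ∫ y, |y - x₁| ∂g (2 * x₁ - x₂) x₂ := hsp1 _ _ _
    _ = ∫ y, |2 * y - x₂ - x₁| ∂g x₁ x₂ := by
      rw [hdev, integral_map (by fun_prop) (by fun_prop)]

theorem endpoint_mass_at_least_half (p : ℝ) (hp : 1 ≤ p)
    (g : ℝ → ℝ → Measure ℝ)
    (hprob : ∀ x₁ x₂ : ℝ, IsProbabilityMeasure (g x₁ x₂))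
    (hsupp : ∀ x₁ x₂ : ℝ, x₁ < x₂ →
      g x₁ x₂ ({x₁, (x₁ + x₂) / 2, x₂} : Set ℝ)ᶜ = 0)
    (hsym : ∀ x₁ x₂ t : ℝ, x₁ < x₂ →
      g x₁ x₂ {y | (x₁ + x₂) / 2 + t ≤ y} = g x₁ x₂ {y | y ≤ (x₁ + x₂) / 2 - t})
    (hshift : ∀ x₁ x₂ c : ℝ, g (x₁ + c) (x₂ + c) = Measure.map (· + c) (g x₁ x₂))
    (hscale : ∀ x₁ x₂ c : ℝ, 0 < c → g (c * x₁) (c * x₂) = Measure.map (c * ·) (g x₁ x₂))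
    (hsp1 : ∀ x₁ x₂ x₁' : ℝ,
      ∫ y, |y - x₁| ∂(g x₁ x₂) ≤ ∫ y, |y - x₁| ∂(g x₁' x₂))
    (hsp2 : ∀ x₁ x₂ x₂' : ℝ,
      ∫ y, |y - x₂| ∂(g x₁ x₂) ≤ ∫ y, |y - x₂| ∂(g x₁ x₂')) :
    ∀ x₁ x₂ : ℝ, x₁ < x₂ → 1 / 2 ≤ (g x₁ x₂ ({x₁, x₂} : Set ℝ)).toReal :=
  endpoint_mass_at_least_half_general g hprob hsupp hsym hshift hscale hsp1
end
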